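/- arXiv:math/0511083 — 2 statements merged into one kernel-verified Lean document; each statement's English description precedes it below -/
import Mathlib

section
/- Let G be a non-elementary GBS group which is not unimodular, and let α : G → G be an injective group endomorphism. Then the Reidemeister number R(α) is infinite: there are infinitely many α-twisted conjugacy classes in G. -/
/-- A GBS (generalized Baumslag–Solitar) tree for a group `G`: a locally finite simplicial
tree on which `G` acts by graph automorphisms without inversions, minimally, with all vertex
and edge stabilizers infinite cyclic. -/
structure GBSTree (G : Type) [Group G] : Type 1 where
  V : Type
  graph : SimpleGraph V
  isTree : graph.IsTree
  locallyFinite : ∀ v : V, (graph.neighborSet v).Finite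
  act : G → V → V
  act_one : ∀ v, act 1 v = v
  act_mul : ∀ g h v, act (g * h) v = act g (act h v)
  act_adj : ∀ g v w, graph.Adj v w → graph.Adj (act g v) (act g w)
  no_inversions : ∀ g v w, graph.Adj v w → ¬(act g v = w ∧ act g w = v)
  minimal : ∀ S : Set V, S.Nonempty → (∀ g, ∀ v ∈ S, act g v ∈ S) →
    (graph.induce S).Connected → S = Set.univ
  vertex_stab_infinite_cyclic : ∀ v : V, ∃ a : G, ¬ IsOfFinOrder a ∧
    ∀ g : G, act g v = v ↔ g ∈ Subgroup.zpowers a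
  edge_stab_infinite_cyclic : ∀ v w : V, graph.Adj v w → ∃ a : G, ¬ IsOfFinOrder a ∧
    ∀ g : G, (act g v = v ∧ act g w = w) ↔ g ∈ Subgroup.zpowers a

/-- The single relation `a² = b²` of the Klein bottle group. -/
def kleinBottleRels : Set (FreeGroup (Fin 2)) :=
  {FreeGroup.of 0 ^ 2 * (FreeGroup.of 1 ^ 2)⁻¹}

/-- A non-elementary GBS group: a finitely generated group acting on a GBS tree which is
not isomorphic to `ℤ`, `ℤ²`, or the Klein bottle group `⟨a,b | a² = b²⟩`. -/
def IsNonElementaryGBSGroup (G : Type) [Group G] : Prop :=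
  Group.FG G ∧ Nonempty (GBSTree G) ∧
    IsEmpty (G ≃* Multiplicative ℤ) ∧
    IsEmpty (G ≃* Multiplicative (ℤ × ℤ)) ∧
    IsEmpty (G ≃* PresentedGroup kleinBottleRels)

/-- A GBS group is unimodular if `x y^p x⁻¹ = y^q` with `y ≠ 1` and `p, q` nonzero
implies `|p| = |q|`. -/
def Unimodular (G : Type) [Group G] : Prop :=
  ∀ x y : G, ∀ p q : ℤ, p ≠ 0 → q ≠ 0 → y ≠ 1 → x * y ^ p * x⁻¹ = y ^ q → |p| = |q|

/-- Twisted conjugacy: `g'` is `α`-twisted conjugate to `g` if `g' = h g (α h)⁻¹` for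
some `h`. The Reidemeister number of `α` is the number of equivalence classes of this
relation, i.e. the cardinality of `Quot (twistedConj α)`. -/
def twistedConj {G : Type} [Group G] (α : G →* G) (g g' : G) : Prop :=
  ∃ h : G, g' = h * g * (α h)⁻¹

/-!
Fix a vertex stabilizer `⟨a⟩`. By local finiteness of the tree all elliptic subgroups are
commensurable, so every `x` satisfies some `x a^m x⁻¹ = a^n` with `m ≠ 0`, and `x ↦ n / m` is a
homomorphism `Δ : G → ℚˣ`. A hyperbolic `y` translates along an axis, so it satisfies no relation
`x y^p x⁻¹ = y^q` with `|p| ≠ |q|`; hence in every such relation `y` is elliptic and `Δ x = q / p`.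
As the injective `α` maps such relations to such relations, and non-unimodularity provides one,
`Δ ∘ α = Δ`. So `Δ` is constant on `α`-twisted conjugacy classes, and the powers of an `x₀` with
`|Δ x₀| ≠ 1` lie in pairwise distinct classes.
-/

namespace SimpleGraph

variable {V : Type*} {G : SimpleGraph V} {u v w : V}

theorem IsAcyclic.isPath_append (hG : G.IsAcyclic) {p : G.Walk u v} {q : G.Walk v w}
    (hp : p.IsPath) (hq : q.IsPath) (hpq : p.penultimate ≠ q.snd) : (p.append q).IsPath := by
  rw [hG.isPath_iff_isChain] at hp hq ⊢
  rw [Walk.edges_append, List.isChain_append]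
  refine ⟨hp, hq, fun e he e' he' hee' => hpq ?_⟩
  obtain ⟨hpe, rfl⟩ := List.mem_getLast?_eq_getLast he
  obtain ⟨hqe, rfl⟩ : ∃ h, e' = q.edges.head h := by
    cases hqe : q.edges <;> simp_all
  rw [Walk.getLast_edges_eq_mk_penultimate_end, Walk.head_edges_eq_mk_start_snd] at hee'
  have hne : p.penultimate ≠ v := (Walk.adj_penultimate (Walk.edges_eq_nil.not.mp hpe)).ne
  simpa [Sym2.eq_swap (a := v), hne] using hee'

theorem IsTree.length_eq_dist (hG : G.IsTree) {p : G.Walk u v} (hp : p.IsPath) :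
    p.length = G.dist u v := by
  obtain ⟨q, hq, hql⟩ := hG.connected.exists_path_of_dist u v
  have : p = q := congrArg Subtype.val ((hG.isAcyclic.subsingleton_path u v).elim ⟨p, hp⟩ ⟨q, hq⟩)
  rw [this, hql]

/-- Otherwise `P.snd` would be displaced by at most `|P| - 2`, or (if `|P| = 1`) `f` would invert
the edge from `v` to `f v`. -/
theorem Walk.penultimate_ne_map_snd {f : G →g G} (hinv : ∀ v, G.Adj v (f v) → f (f v) ≠ v)
    (hv : ∀ w, G.dist v (f v) ≤ G.dist w (f w)) {P : G.Walk v (f v)}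
    (hPl : P.length = G.dist v (f v)) (hpos : 0 < P.length) : P.penultimate ≠ f P.snd := by
  intro h
  rcases (Nat.one_le_iff_ne_zero.mpr hpos.ne').eq_or_lt with h1 | h2
  · have hsnd : P.snd = f v := P.getVert_of_length_le h1.ge
    have hpen : P.penultimate = v := by simp [Walk.penultimate, ← h1]
    exact hinv v (dist_eq_one_iff_adj.mp (hPl ▸ h1.symm)) (by rw [← hsnd, ← h, hpen])
  · have hshort : G.dist P.snd P.penultimate ≤ P.length - 2 := by
      have hidx : 1 + (P.length - 2) = P.length - 1 := by omega
      have := dist_le ((P.drop 1).take (P.length - 2))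
      rw [Walk.take_length, Walk.drop_getVert, hidx] at this
      exact this.trans (min_le_left _ _)
    have := hv P.snd
    rw [← h] at this
    omega

/-- A vertex of minimal displacement lies on an axis of `f`: the geodesics from `f^[i] v` to
`f^[i+1] v` concatenate without backtracking. -/
theorem IsTree.exists_dist_iterate_eq_mul (hG : G.IsTree) (f : G →g G)
    (hf : Function.Injective f) (hfix : ∀ v, f v ≠ v) (hinv : ∀ v, G.Adj v (f v) → f (f v) ≠ v) :
    ∃ v, 0 < G.dist v (f v) ∧ ∀ n : ℕ, G.dist v (f^[n] v) = n * G.dist v (f v) := by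
  have := hG.connected.nonempty
  obtain ⟨v, hv⟩ : ∃ v, ∀ w, G.dist v (f v) ≤ G.dist w (f w) :=
    ⟨_, fun w => Function.argmin_le (fun w => G.dist w (f w)) w⟩
  set ℓ := G.dist v (f v)
  have hℓ : 0 < ℓ := hG.connected.pos_dist_of_ne (hfix v).symm
  obtain ⟨P, hP, hPl⟩ : ∃ P : G.Walk v (f v), P.IsPath ∧ P.length = ℓ :=
    hG.connected.exists_path_of_dist v (f v)
  have hjunction := Walk.penultimate_ne_map_snd hinv hv hPl (hPl ▸ hℓ)
  -- the endpoint is generalised so that `f^[n + 2] v` can be rewritten to `f (f^[n + 1] v)`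
  have hpath : ∀ n w, f^[n + 1] v = w →
      ∃ Q : G.Walk v w, Q.IsPath ∧ Q.length = (n + 1) * ℓ ∧ Q.snd = P.snd := by
    intro n
    induction n with
    | zero => rintro w rfl; exact ⟨P, hP, by simp [hPl], rfl⟩
    | succ n ih =>
      rintro w rfl
      obtain ⟨Q, hQ, hQl, hQs⟩ := ih _ rfl
      rw [Function.iterate_succ_apply']
      refine ⟨P.append (Q.map f), hG.isAcyclic.isPath_append hP (hQ.map hf) ?_, ?_, ?_⟩
      · rwa [Walk.snd, Walk.getVert_map, ← Walk.snd, hQs]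
      · rw [Walk.length_append, Walk.length_map, hQl, hPl]; ring
      · rw [Walk.snd, Walk.getVert_append', if_pos (by omega)]
  refine ⟨v, hℓ, fun n => ?_⟩
  cases n with
  | zero => simp
  | succ n =>
    obtain ⟨Q, hQ, hQl, -⟩ := hpath n _ rfl
    rw [← hG.length_eq_dist hQ, hQl]

end SimpleGraph

section ModularHom

variable {G : Type*} [Group G] {a x y : G} {m n p q : ℤ}

theorem conj_zpow_mul_eq (h : x * y ^ p * x⁻¹ = y ^ q) (k : ℤ) :
    x * y ^ (p * k) * x⁻¹ = y ^ (q * k) := by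
  rw [zpow_mul, ← conj_zpow, h, ← zpow_mul]

theorem div_eq_div_of_conj_zpow (ha : ¬IsOfFinOrder a) {m' n' : ℤ} (hm : m ≠ 0) (hm' : m' ≠ 0)
    (h : x * a ^ m * x⁻¹ = a ^ n) (h' : x * a ^ m' * x⁻¹ = a ^ n') :
    (n : ℚ) / m = n' / m' := by
  have hpow : a ^ (n * m') = a ^ (n' * m) := by
    rw [← conj_zpow_mul_eq h, ← conj_zpow_mul_eq h', mul_comm]
  rw [div_eq_div_iff (by exact_mod_cast hm) (by exact_mod_cast hm')]
  exact_mod_cast injective_zpow_iff_not_isOfFinOrder.mpr ha hpow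

theorem ne_zero_of_conj_zpow (ha : ¬IsOfFinOrder a) (hm : m ≠ 0) (h : x * a ^ m * x⁻¹ = a ^ n) :
    n ≠ 0 := by
  rintro rfl
  rw [zpow_zero, mul_inv_eq_one, mul_eq_left] at h
  exact ha (isOfFinOrder_iff_zpow_eq_one.mpr ⟨m, hm, h⟩)

theorem abs_intCast_div_eq_one_iff (hm : m ≠ 0) : |(n : ℚ) / m| = 1 ↔ |m| = |n| := by
  rw [abs_div, div_eq_one_iff_eq (by positivity), eq_comm]
  exact_mod_cast Iff.rfl

/-- `n / m` for the relation `x a^m x⁻¹ = a^n` chosen by `hconj`; by `div_eq_div_of_conj_zpow`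
the choice does not matter. -/
noncomputable def modularRatio (hconj : ∀ x : G, ∃ m n : ℤ, m ≠ 0 ∧ x * a ^ m * x⁻¹ = a ^ n)
    (x : G) : ℚ :=
  ((hconj x).choose_spec.choose : ℚ) / (hconj x).choose

variable (hconj : ∀ x : G, ∃ m n : ℤ, m ≠ 0 ∧ x * a ^ m * x⁻¹ = a ^ n)

theorem modularRatio_eq (ha : ¬IsOfFinOrder a) (hm : m ≠ 0) (h : x * a ^ m * x⁻¹ = a ^ n) :
    modularRatio hconj x = n / m :=
  div_eq_div_of_conj_zpow ha (hconj x).choose_spec.choose_spec.1 hm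
    (hconj x).choose_spec.choose_spec.2 h

theorem modularRatio_ne_zero (ha : ¬IsOfFinOrder a) (x : G) : modularRatio hconj x ≠ 0 := by
  obtain ⟨m, n, hm, h⟩ := hconj x
  rw [modularRatio_eq hconj ha hm h]
  exact div_ne_zero (by exact_mod_cast ne_zero_of_conj_zpow ha hm h) (by exact_mod_cast hm)

theorem modularRatio_mul (ha : ¬IsOfFinOrder a) (x y : G) :
    modularRatio hconj (x * y) = modularRatio hconj x * modularRatio hconj y := by
  obtain ⟨mx, nx, hmx, hx⟩ := hconj x
  obtain ⟨my, ny, hmy, hy⟩ := hconj y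
  have hxy : x * y * a ^ (my * mx) * (x * y)⁻¹ = a ^ (nx * ny) :=
    calc x * y * a ^ (my * mx) * (x * y)⁻¹ = x * (y * a ^ (my * mx) * y⁻¹) * x⁻¹ := by group
      _ = a ^ (nx * ny) := by rw [conj_zpow_mul_eq hy, mul_comm ny, conj_zpow_mul_eq hx]
  rw [modularRatio_eq hconj ha (mul_ne_zero hmy hmx) hxy, modularRatio_eq hconj ha hmx hx,
    modularRatio_eq hconj ha hmy hy]
  push_cast
  field_simp

/-- The modular homomorphism `Δ` of the commensurated cyclic subgroup `⟨a⟩`. -/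
noncomputable def modularHom (ha : ¬IsOfFinOrder a) : G →* ℚˣ :=
  MonoidHom.mk' (fun x => Units.mk0 _ (modularRatio_ne_zero hconj ha x))
    fun x y => Units.ext (modularRatio_mul hconj ha x y)

theorem coe_modularHom_eq (ha : ¬IsOfFinOrder a) (hm : m ≠ 0) (h : x * a ^ m * x⁻¹ = a ^ n) :
    (modularHom hconj ha x : ℚ) = n / m :=
  modularRatio_eq hconj ha hm h

theorem coe_modularHom_eq_of_zpow_eq_zpow (ha : ¬IsOfFinOrder a) {i j : ℤ} (hj : j ≠ 0)
    (hij : y ^ i = a ^ j) (hp : p ≠ 0) (h : x * y ^ p * x⁻¹ = y ^ q) :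
    (modularHom hconj ha x : ℚ) = q / p := by
  have hrel : x * a ^ (j * p) * x⁻¹ = a ^ (j * q) := by
    simpa only [mul_comm _ i, zpow_mul, hij] using conj_zpow_mul_eq h i
  rw [coe_modularHom_eq hconj ha (mul_ne_zero hj hp) hrel]
  push_cast
  exact mul_div_mul_left _ _ (by exact_mod_cast hj)

/-- Applying `α` to `x a^m x⁻¹ = a^n` gives a relation for `α a ≠ 1`, which `hdet` evaluates as
soon as `|m| ≠ |n|`; every other `x` is reached by multiplying with `x₀`. -/
theorem modularHom_comp_eq_of_injective (ha : ¬IsOfFinOrder a)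
    (hdet : ∀ ⦃x y : G⦄ ⦃p q : ℤ⦄, y ≠ 1 → p ≠ 0 → |p| ≠ |q| → x * y ^ p * x⁻¹ = y ^ q →
      (modularHom hconj ha x : ℚ) = q / p)
    {x₀ : G} (hx₀ : |(modularHom hconj ha x₀ : ℚ)| ≠ 1) {α : G →* G}
    (hα : Function.Injective α) : (modularHom hconj ha).comp α = modularHom hconj ha := by
  set Δ := modularHom hconj ha
  have hcomp_of_abs_ne_one : ∀ x, |(Δ x : ℚ)| ≠ 1 → Δ (α x) = Δ x := by
    intro x hx
    obtain ⟨m, n, hm, h⟩ := hconj x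
    have hΔ : (Δ x : ℚ) = n / m := coe_modularHom_eq hconj ha hm h
    rw [hΔ, ne_eq, abs_intCast_div_eq_one_iff hm] at hx
    have hαa : α a ≠ 1 := fun h1 => ha (hα (h1.trans (map_one α).symm) ▸ IsOfFinOrder.one)
    refine Units.ext ((hdet hαa hm hx ?_).trans hΔ.symm)
    simpa only [map_mul, map_zpow, map_inv] using congrArg α h
  ext1 x
  by_cases hx : |(Δ x : ℚ)| = 1
  · have hxx₀ : |(Δ (x * x₀) : ℚ)| ≠ 1 := by
      rwa [map_mul, Units.val_mul, abs_mul, hx, one_mul]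
    have := hcomp_of_abs_ne_one _ hxx₀
    rw [map_mul, map_mul, map_mul, hcomp_of_abs_ne_one x₀ hx₀] at this
    exact mul_right_cancel this
  · exact hcomp_of_abs_ne_one x hx

end ModularHom

theorem Units.not_isOfFinOrder_of_abs_ne_one {K : Type*} [Field K] [LinearOrder K]
    [IsStrictOrderedRing K] {u : Kˣ} (hu : |(u : K)| ≠ 1) : ¬IsOfFinOrder u := by
  intro hfin
  obtain ⟨n, hn, hu1⟩ := isOfFinOrder_iff_pow_eq_one.mp hfin
  have : |(u : K)| ^ n = 1 := by
    rw [← abs_pow, ← Units.val_pow_eq_pow_val, hu1, Units.val_one, abs_one]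
  exact hu ((pow_eq_one_iff_of_nonneg (abs_nonneg _) hn.ne').mp this)

theorem twistedConj.map_eq {G : Type} {A : Type*} [Group G] [CommGroup A] {α : G →* G}
    {χ : G →* A} (hχ : χ.comp α = χ) {g g' : G} (h : twistedConj α g g') : χ g = χ g' := by
  obtain ⟨k, rfl⟩ := h
  rw [map_mul, map_mul, map_inv, ← MonoidHom.comp_apply, hχ, mul_comm (χ k),
    mul_inv_cancel_right]

theorem infinite_quot_twistedConj {G : Type} {A : Type*} [Group G] [CommGroup A] {α : G →* G}
    {χ : G →* A} (hχ : χ.comp α = χ) {x : G} (hx : ¬IsOfFinOrder (χ x)) :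
    Infinite (Quot (twistedConj α)) := by
  let χ' : Quot (twistedConj α) → A := Quot.lift χ fun _ _ => twistedConj.map_eq hχ
  refine Infinite.of_injective (fun n : ℤ => Quot.mk _ (x ^ n)) fun m n hmn => ?_
  apply injective_zpow_iff_not_isOfFinOrder.mpr hx
  simpa only [χ', map_zpow] using congrArg χ' hmn

open SimpleGraph

namespace GBSTree

variable {G : Type} [Group G] (T : GBSTree G)

theorem act_inv_act (g : G) (v : T.V) : T.act g⁻¹ (T.act g v) = v := by
  rw [← T.act_mul, inv_mul_cancel, T.act_one]

theorem act_act_inv (g : G) (v : T.V) : T.act g (T.act g⁻¹ v) = v := by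
  simpa only [inv_inv] using T.act_inv_act g⁻¹ v

theorem act_injective (g : G) : Function.Injective (T.act g) :=
  Function.LeftInverse.injective (T.act_inv_act g)

theorem act_pow (g : G) (n : ℕ) : T.act (g ^ n) = (T.act g)^[n] := by
  induction n with
  | zero => funext v; rw [pow_zero, T.act_one, Function.iterate_zero_apply]
  | succ n ih => funext v; rw [pow_succ, T.act_mul, ih, Function.iterate_succ_apply]

def actHom (g : G) : T.graph →g T.graph :=
  ⟨T.act g, T.act_adj g _ _⟩

theorem dist_act (g : G) (u v : T.V) : T.graph.dist (T.act g u) (T.act g v) = T.graph.dist u v := by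
  have hle : ∀ (g : G) (u v : T.V), T.graph.dist (T.act g u) (T.act g v) ≤ T.graph.dist u v := by
    intro g u v
    obtain ⟨p, -, hp⟩ := T.isTree.connected.exists_path_of_dist u v
    have := SimpleGraph.dist_le (p.map (T.actHom g))
    rwa [Walk.length_map, hp] at this
  refine (hle g u v).antisymm ?_
  simpa only [act_inv_act] using hle g⁻¹ (T.act g u) (T.act g v)

noncomputable def stabGen (v : T.V) : G :=
  (T.vertex_stab_infinite_cyclic v).choose

theorem not_isOfFinOrder_stabGen (v : T.V) : ¬IsOfFinOrder (T.stabGen v) :=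
  (T.vertex_stab_infinite_cyclic v).choose_spec.1

theorem act_eq_self_iff {v : T.V} {g : G} : T.act g v = v ↔ g ∈ Subgroup.zpowers (T.stabGen v) :=
  (T.vertex_stab_infinite_cyclic v).choose_spec.2 g

theorem act_zpow_eq_self {v : T.V} {g : G} (h : T.act g v = v) (k : ℤ) : T.act (g ^ k) v = v :=
  T.act_eq_self_iff.mpr (zpow_mem (T.act_eq_self_iff.mp h) k)

theorem not_isOfFinOrder_of_act_eq_self {v : T.V} {y : G} (hy : T.act y v = v) (hy1 : y ≠ 1) :
    ¬IsOfFinOrder y := by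
  obtain ⟨k, rfl⟩ := Subgroup.mem_zpowers_iff.mp (T.act_eq_self_iff.mp hy)
  have hk : k ≠ 0 := by rintro rfl; exact hy1 (zpow_zero _)
  rintro hfin
  obtain ⟨n, hn, h⟩ := isOfFinOrder_iff_zpow_eq_one.mp hfin
  rw [← zpow_mul] at h
  exact T.not_isOfFinOrder_stabGen v
    (isOfFinOrder_iff_zpow_eq_one.mpr ⟨k * n, mul_ne_zero hk hn, h⟩)

/-- Pigeonhole: the `⟨g⟩`-orbit of `w` lies in the finite neighbourhood of `v`. -/
theorem exists_zpow_act_eq_self_of_adj {v w : T.V} {g : G} (hg : T.act g v = v)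
    (hvw : T.graph.Adj v w) : ∃ k : ℤ, k ≠ 0 ∧ T.act (g ^ k) w = w := by
  have := (T.locallyFinite v).to_subtype
  have hmem (k : ℤ) : T.act (g ^ k) w ∈ T.graph.neighborSet v := by
    simpa only [mem_neighborSet, T.act_zpow_eq_self hg k] using T.act_adj (g ^ k) v w hvw
  obtain ⟨k, k', hkk', heq⟩ := Finite.exists_ne_map_eq_of_infinite
    fun k : ℤ => (⟨T.act (g ^ k) w, hmem k⟩ : T.graph.neighborSet v)
  refine ⟨k - k', sub_ne_zero.mpr hkk', ?_⟩
  have := congrArg (T.act (g ^ k')⁻¹ ∘ Subtype.val) heq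
  simp only [Function.comp_apply, ← T.act_mul, ← zpow_neg, ← zpow_add, neg_add_cancel,
    zpow_zero, T.act_one] at this
  rwa [sub_eq_neg_add]

theorem exists_zpow_act_eq_self {v : T.V} {g : G} (hg : T.act g v = v) (w : T.V) :
    ∃ k : ℤ, k ≠ 0 ∧ T.act (g ^ k) w = w := by
  obtain ⟨p⟩ := T.isTree.connected v w
  induction p generalizing g with
  | nil => exact ⟨1, one_ne_zero, by rwa [zpow_one]⟩
  | cons hadj _ ih =>
    obtain ⟨k, hk, hgk⟩ := T.exists_zpow_act_eq_self_of_adj hg hadj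
    obtain ⟨j, hj, hgkj⟩ := ih hgk
    exact ⟨k * j, mul_ne_zero hk hj, by rwa [zpow_mul]⟩

theorem exists_dist_act_zpow_eq {y : G} (hy : ∀ v, T.act y v ≠ v) :
    ∃ v ℓ, 0 < ℓ ∧ ∀ n : ℤ, T.graph.dist v (T.act (y ^ n) v) = n.natAbs * ℓ := by
  obtain ⟨v, hℓ, hv⟩ := T.isTree.exists_dist_iterate_eq_mul (T.actHom y) (T.act_injective y) hy
    fun v hadj h => T.no_inversions y v _ hadj ⟨rfl, h⟩
  have hnat (n : ℕ) : T.graph.dist v (T.act (y ^ n) v) = n * T.graph.dist v (T.act y v) := by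
    rw [T.act_pow]
    exact hv n
  refine ⟨v, T.graph.dist v (T.act y v), hℓ, fun n => ?_⟩
  obtain ⟨n, rfl | rfl⟩ := Int.eq_nat_or_neg n
  · rw [zpow_natCast, hnat, Int.natAbs_natCast]
  · rw [zpow_neg, zpow_natCast, Int.natAbs_neg, Int.natAbs_natCast, ← hnat, dist_comm,
      ← T.dist_act (y ^ n), T.act_act_inv]

/-- `y^(qk) = x y^(pk) x⁻¹` moves `v` by `k |q| ℓ`, while this conjugate of `y^(pk)` moves `v`
by at most `k |p| ℓ + 2 d(v, x⁻¹ v)`. -/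
theorem natAbs_le_of_conj_zpow {x y : G} {p q : ℤ} (hy : ∀ v, T.act y v ≠ v)
    (h : x * y ^ p * x⁻¹ = y ^ q) : q.natAbs ≤ p.natAbs := by
  obtain ⟨v, ℓ, hℓ, hv⟩ := T.exists_dist_act_zpow_eq hy
  have hconn := T.isTree.connected
  set C := T.graph.dist v (T.act x⁻¹ v)
  have hbound (k : ℕ) : k * q.natAbs * ℓ ≤ k * p.natAbs * ℓ + 2 * C := by
    set w := T.act x⁻¹ v
    set z := y ^ (p * k)
    have hqk : T.act (y ^ (q * k)) v = T.act x (T.act z w) := by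
      rw [← conj_zpow_mul_eq h, T.act_mul, T.act_mul]
    calc k * q.natAbs * ℓ = T.graph.dist v (T.act (y ^ (q * k)) v) := by
          rw [hv, Int.natAbs_mul, Int.natAbs_natCast]; ring
      _ = T.graph.dist w (T.act z w) := by rw [hqk, ← T.dist_act x⁻¹, T.act_inv_act]
      _ ≤ T.graph.dist w v + T.graph.dist v (T.act z v) + T.graph.dist (T.act z v) (T.act z w) :=
          (hconn.dist_triangle (v := T.act z v)).trans
            (Nat.add_le_add_right (hconn.dist_triangle (v := v)) _)
      _ = k * p.natAbs * ℓ + 2 * C := by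
          rw [T.dist_act, hv, dist_comm, Int.natAbs_mul, Int.natAbs_natCast]; ring
  by_contra! hlt
  have hq : (2 * C + 1) * (p.natAbs + 1) * ℓ ≤ (2 * C + 1) * q.natAbs * ℓ := by gcongr; omega
  have hℓ' : (2 * C + 1) * 1 ≤ (2 * C + 1) * ℓ := by gcongr; omega
  nlinarith [hbound (2 * C + 1)]

theorem abs_eq_of_conj_zpow {x y : G} {p q : ℤ} (hy : ∀ v, T.act y v ≠ v)
    (h : x * y ^ p * x⁻¹ = y ^ q) : |p| = |q| := by
  have h' : x⁻¹ * y ^ q * x⁻¹⁻¹ = y ^ p := by rw [← h]; group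
  rw [Int.abs_eq_natAbs, Int.abs_eq_natAbs]
  exact_mod_cast (T.natAbs_le_of_conj_zpow hy h').antisymm (T.natAbs_le_of_conj_zpow hy h)

theorem exists_conj_zpow_stabGen (v : T.V) (x : G) :
    ∃ m n : ℤ, m ≠ 0 ∧ x * T.stabGen v ^ m * x⁻¹ = T.stabGen v ^ n := by
  have hfix : T.act (x * T.stabGen v * x⁻¹) (T.act x v) = T.act x v := by
    rw [← T.act_mul, inv_mul_cancel_right, T.act_mul,
      T.act_eq_self_iff.mpr (Subgroup.mem_zpowers _)]
  obtain ⟨m, hm, hxm⟩ := T.exists_zpow_act_eq_self hfix v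
  obtain ⟨n, hn⟩ := Subgroup.mem_zpowers_iff.mp (T.act_eq_self_iff.mp hxm)
  exact ⟨m, n, hm, by rw [← conj_zpow, hn]⟩

/-- Relations `x y^p x⁻¹ = y^q` with `|p| ≠ |q|` only occur for elliptic `y`, which is
commensurable with every vertex stabilizer. -/
theorem coe_modularHom_eq_of_conj_zpow (v : T.V) ⦃x y : G⦄ ⦃p q : ℤ⦄ (hy1 : y ≠ 1) (hp : p ≠ 0)
    (hpq : |p| ≠ |q|) (h : x * y ^ p * x⁻¹ = y ^ q) :
    (modularHom (T.exists_conj_zpow_stabGen v) (T.not_isOfFinOrder_stabGen v) x : ℚ) = q / p := by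
  obtain ⟨w, hw⟩ : ∃ w, T.act y w = w := by
    by_contra! hy
    exact hpq (T.abs_eq_of_conj_zpow hy h)
  obtain ⟨i, hi, hyi⟩ := T.exists_zpow_act_eq_self hw v
  obtain ⟨j, hj⟩ := Subgroup.mem_zpowers_iff.mp (T.act_eq_self_iff.mp hyi)
  have hj0 : j ≠ 0 := by
    rintro rfl
    exact T.not_isOfFinOrder_of_act_eq_self hw hy1
      (isOfFinOrder_iff_zpow_eq_one.mpr ⟨i, hi, by rw [← hj, zpow_zero]⟩)
  exact coe_modularHom_eq_of_zpow_eq_zpow _ _ hj0 hj.symm hp h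

end GBSTree

/-- **Levitt, Proposition 2.9 (2).** Every injective endomorphism of a non-elementary,
non-unimodular GBS group has infinite Reidemeister number. -/
theorem reidemeister_infinite_of_injective (G : Type) [Group G]
    (hG : IsNonElementaryGBSGroup G) (hnu : ¬ Unimodular G)
    (α : G →* G) (hα : Function.Injective α) :
    Infinite (Quot (twistedConj α)) := by
  obtain ⟨-, ⟨T⟩, -⟩ := hG
  obtain ⟨v⟩ := T.isTree.connected.nonempty
  set Δ := modularHom (T.exists_conj_zpow_stabGen v) (T.not_isOfFinOrder_stabGen v)
  have hdet := T.coe_modularHom_eq_of_conj_zpow v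
  obtain ⟨x₀, y₀, p, q, hp, -, hy₀, h, hpq⟩ : ∃ x y : G, ∃ p q : ℤ,
      p ≠ 0 ∧ q ≠ 0 ∧ y ≠ 1 ∧ x * y ^ p * x⁻¹ = y ^ q ∧ |p| ≠ |q| := by
    simpa [Unimodular] using hnu
  have hx₀ : |(Δ x₀ : ℚ)| ≠ 1 := by
    rwa [hdet hy₀ hp hpq h, ne_eq, abs_intCast_div_eq_one_iff hp]
  exact infinite_quot_twistedConj (modularHom_comp_eq_of_injective _ _ hdet hx₀ hα)
    (Units.not_isOfFinOrder_of_abs_ne_one hx₀)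
end

section
/- Let J be the group with presentation ⟨a, b, c | a² = b², b² = c²⟩. There is an automorphism α of J fixing a and b and sending c to (ba)c(ba)⁻¹, and an automorphism β of J fixing b and c and sending a to (bc)a(bc)⁻¹. The images of α and β in Out(J) generate a free subgroup of rank 2; in particular Out(J) contains a nonabelian free group. -/
/-!
Let `J` act on `ℤ²` by affine maps, `a`, `b`, `c` acting as the point reflections
`x ↦ e₀ - x`, `x ↦ -x` and `x ↦ -e₁ - x`. Then `ab` and `bc` act as the translations by `e₀` and
`e₁`, and `α`, `β` become conjugation by the linear maps `A = [[1, 2], [0, 1]]` and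
`B = [[1, 0], [2, 1]]`. Only the identity of `ℤ² ⋊ GL₂(ℤ)` commutes with the translations and with
`x ↦ -x`, so if a word `w(α, β)` is the inner automorphism of some `g`, then `w(A, B)` is the image
of `g`, whose linear part is `±1`. Hence `w(A, B)² = 1`; since `A` and `B` generate a free group
(Sanov, by ping-pong on the slopes of integer vectors) and free groups are torsion-free, `w = 1`.
-/

/-- The subgroup of inner automorphisms of `G`. -/
def innerAutos (G : Type) [Group G] : Subgroup (MulAut G) := (MulAut.conj (G := G)).range

instance innerAutos.normal (G : Type) [Group G] : (innerAutos G).Normal := by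
  constructor
  rintro x ⟨g, rfl⟩ φ
  refine ⟨φ g, ?_⟩
  ext y
  simp [MulAut.conj_apply, MulAut.mul_apply, mul_assoc]

/-- The outer automorphism group of `G`. -/
def Out (G : Type) [Group G] : Type := MulAut G ⧸ innerAutos G

instance (G : Type) [Group G] : Group (Out G) :=
  inferInstanceAs (Group (MulAut G ⧸ innerAutos G))

/-- The natural projection from `Aut G` to `Out G`. -/
def toOut (G : Type) [Group G] : MulAut G →* Out G := QuotientGroup.mk' (innerAutos G)

/-- The relations `a² = b²` and `b² = c²` of the group `J = ⟨a,b,c | a² = b², b² = c²⟩`,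
where `a`, `b`, `c` are the generators `0`, `1`, `2`. -/
def JRels : Set (FreeGroup (Fin 3)) :=
  {FreeGroup.of 0 ^ 2 * (FreeGroup.of 1 ^ 2)⁻¹,
   FreeGroup.of 1 ^ 2 * (FreeGroup.of 2 ^ 2)⁻¹}

/-- The group `J = ⟨a,b,c | a² = b², b² = c²⟩`. -/
abbrev JGroup : Type := PresentedGroup JRels

/-- The generators `a`, `b`, `c` of `J`. -/
def Ja : JGroup := PresentedGroup.of 0
def Jb : JGroup := PresentedGroup.of 1
def Jc : JGroup := PresentedGroup.of 2

open SemidirectProduct Function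

theorem pairwise_disjoint_fin_two {α : Type*} [PartialOrder α] [OrderBot α] {f : Fin 2 → α}
    (h : Disjoint (f 0) (f 1)) : Pairwise (Disjoint on f) :=
  (Std.Symm.pairwise_on f).mpr fun m n hmn => by
    fin_cases m <;> fin_cases n <;> simp_all

section Intertwiners

variable {G V : Type*} [Group G] [Group V]

def intertwiners (ρ : G →* V) : Subgroup (MulAut G × MulAut V) where
  carrier := {p | ∀ x, ρ (p.1 x) = p.2 (ρ x)}
  mul_mem' hp hq x := by simp [hp _, hq _]
  one_mem' x := rfl
  inv_mem' {p} hp x := by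
    apply p.2.injective
    rw [← hp]
    simp

theorem eq_of_conj_mem_intertwiners {ρ : G →* V}
    (hρ : Subgroup.centralizer (Set.range ρ) = ⊥) {g : G} {m : V}
    (h : (MulAut.conj g, MulAut.conj m) ∈ intertwiners ρ) : ρ g = m := by
  suffices m⁻¹ * ρ g ∈ Subgroup.centralizer (Set.range ρ) by
    rw [hρ, Subgroup.mem_bot, inv_mul_eq_one] at this
    exact this.symm
  rw [Subgroup.mem_centralizer_iff]
  rintro _ ⟨x, rfl⟩
  have hx := h x
  simp only [MulAut.conj_apply, map_mul, map_inv] at hx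
  calc ρ x * (m⁻¹ * ρ g) = m⁻¹ * (m * ρ x * m⁻¹) * ρ g := by group
    _ = m⁻¹ * (ρ g * ρ x * (ρ g)⁻¹) * ρ g := by rw [hx]
    _ = m⁻¹ * ρ g * ρ x := by group

end Intertwiners

theorem FreeGroup.map_mem_of_forall_of_mem {ι G : Type*} [Group G] (f : FreeGroup ι →* G)
    {S : Subgroup G} (h : ∀ i, f (FreeGroup.of i) ∈ S) (w : FreeGroup ι) : f w ∈ S := by
  have : Subgroup.closure (Set.range FreeGroup.of) ≤ S.comap f :=
    (Subgroup.closure_le _).mpr (by rintro _ ⟨i, rfl⟩; exact h i)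
  rw [FreeGroup.closure_range_of] at this
  exact this trivial

section AffineGroup

variable (n : Type*) [Fintype n] [DecidableEq n]

def linearAut : GL n ℤ →* MulAut (Multiplicative (n → ℤ)) where
  toFun U :=
    { toFun v := .ofAdd (U • v.toAdd)
      invFun v := .ofAdd (U⁻¹ • v.toAdd)
      left_inv v := by simp
      right_inv v := by simp
      map_mul' v w := by simp [smul_add] }
  map_one' := by ext; simp
  map_mul' U W := by ext; simp [mul_smul]

abbrev IntAffineGroup := Multiplicative (n → ℤ) ⋊[linearAut n] GL n ℤ

variable {n}

@[simp]
theorem linearAut_apply (U : GL n ℤ) (v : Multiplicative (n → ℤ)) :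
    linearAut n U v = .ofAdd (U • v.toAdd) := rfl

def translation (v : n → ℤ) : IntAffineGroup n := inl (.ofAdd v)

/-- The point reflection `x ↦ v - x` (through `v / 2`, not through `v`). -/
def reflection (v : n → ℤ) : IntAffineGroup n := translation v * inr (-1)

theorem reflection_mul_reflection (v w : n → ℤ) :
    reflection v * reflection w = translation (v - w) := by
  ext <;> simp [reflection, translation, sub_eq_add_neg]

theorem reflection_sq (v : n → ℤ) : reflection v ^ 2 = 1 := by
  rw [sq, reflection_mul_reflection, sub_self]; rfl

theorem inr_conj_reflection (U : GL n ℤ) (v : n → ℤ) :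
    inr U * reflection v * (inr U)⁻¹ = reflection (U • v) := by
  ext <;> simp [reflection, translation]

theorem translation_conj_reflection (u v : n → ℤ) :
    translation u * reflection v * (translation u)⁻¹ = reflection (u + u + v) := by
  ext <;> simp [reflection, translation, add_right_comm]

@[simp]
theorem right_reflection (v : n → ℤ) : (reflection v).right = -1 := by
  simp [reflection, translation]

theorem reflection_zero : reflection 0 = (inr (-1) : IntAffineGroup n) := by
  simp [reflection, translation]

theorem centralizer_reflection_zero_translations :
    Subgroup.centralizer (insert (reflection 0) (Set.range fun i => translation (Pi.single i 1)))
      = (⊥ : Subgroup (IntAffineGroup n)) := by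
  refine eq_bot_iff.mpr fun D hD => ?_
  rw [Subgroup.mem_centralizer_iff] at hD
  have hneg := hD _ (Set.mem_insert _ _)
  have htr (i : n) := hD _ (Set.mem_insert_of_mem _ ⟨i, rfl⟩)
  have hT : D.right = 1 := by
    refine Units.ext (Matrix.ext_col fun i => ?_)
    have := congrArg (fun x => x.left.toAdd) (htr i)
    simp only [translation, mul_left, left_inl, right_inl, map_one, MulAut.one_apply,
      linearAut_apply, toAdd_mul, toAdd_ofAdd, add_comm _ (Multiplicative.toAdd D.left),
      add_right_inj] at this
    rw [Units.smul_def, Matrix.smul_eq_mulVec, Matrix.mulVec_single_one] at this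
    rw [← this, Units.val_one, ← Matrix.mulVec_single_one, Matrix.one_mulVec]
  have hv : D.left = 1 := by
    have := congrArg SemidirectProduct.left hneg
    simp only [reflection_zero, mul_left, left_inr, right_inr, linearAut_apply, one_mul,
      mul_one, map_one, Units.neg_smul, one_smul] at this
    exact inv_eq_self.mp this
  exact Subgroup.mem_bot.mpr (SemidirectProduct.ext hv hT)

end AffineGroup

def nonzeroSubMulAction (G M : Type*) [Group G] [AddMonoid M] [DistribMulAction G M] :
    SubMulAction G M where
  carrier := {v | v ≠ 0}
  smul_mem' U _ hv := (smul_ne_zero_iff_ne U).mpr hv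

@[simp]
theorem mem_nonzeroSubMulAction {G M : Type*} [Group G] [AddMonoid M] [DistribMulAction G M]
    {v : M} : v ∈ nonzeroSubMulAction G M ↔ v ≠ 0 := Iff.rfl

def sanovA : GL (Fin 2) ℤ :=
  ⟨!![1, 2; 0, 1], !![1, -2; 0, 1], by simp [Matrix.one_fin_two], by simp [Matrix.one_fin_two]⟩

def sanovB : GL (Fin 2) ℤ :=
  ⟨!![1, 0; 2, 1], !![1, 0; -2, 1], by simp [Matrix.one_fin_two], by simp [Matrix.one_fin_two]⟩

def sanovGen : Fin 2 → GL (Fin 2) ℤ := ![sanovA, sanovB]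

def sanovHom : FreeGroup (Fin 2) →* GL (Fin 2) ℤ := FreeGroup.lift sanovGen

theorem sanovA_smul (v : Fin 2 → ℤ) : sanovA • v = ![v 0 + 2 * v 1, v 1] := by
  rw [Matrix.GeneralLinearGroup.fin_two_smul]
  simp [sanovA]

theorem sanovA_inv_smul (v : Fin 2 → ℤ) : sanovA⁻¹ • v = ![v 0 - 2 * v 1, v 1] := by
  rw [Matrix.GeneralLinearGroup.fin_two_smul]
  simp [sanovA, Units.inv_mk]
  ring

theorem sanovB_smul (v : Fin 2 → ℤ) : sanovB • v = ![v 0, 2 * v 0 + v 1] := by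
  rw [Matrix.GeneralLinearGroup.fin_two_smul]
  simp [sanovB]

theorem sanovB_inv_smul (v : Fin 2 → ℤ) : sanovB⁻¹ • v = ![v 0, v 1 - 2 * v 0] := by
  rw [Matrix.GeneralLinearGroup.fin_two_smul]
  simp [sanovB, Units.inv_mk]
  ring

/- On the slope `t = v 0 / v 1`, `sanovA` acts by `t ↦ t + 2` and `sanovB` by `1/t ↦ 1/t + 2`.
The sets below are the slope ranges `(1, ∞]`, `[0, 1]` and `(-∞, -1]`, `(-1, 0)`. -/
def sanovX : Fin 2 → Set (Fin 2 → ℤ) :=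
  ![{v | v 1 * v 1 < v 0 * v 1 ∨ v 1 = 0}, {v | v 0 * v 0 ≤ v 0 * v 1}]

def sanovY : Fin 2 → Set (Fin 2 → ℤ) :=
  ![{v | v 1 ≠ 0 ∧ v 0 * v 1 ≤ -(v 1 * v 1)}, {v | v 0 * v 1 < -(v 0 * v 0)}]

theorem sanovX_zero_inter_one_subset : sanovX 0 ∩ sanovX 1 ⊆ {0} := by
  rintro v ⟨h0, h1⟩
  simp only [sanovX, Matrix.cons_val_zero, Matrix.cons_val_one, Set.mem_ofPred_eq] at h0 h1
  rcases h0 with h | h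
  · nlinarith [mul_self_nonneg (v 0 - v 1)]
  · have h' : v 0 = 0 := by nlinarith [mul_self_nonneg (v 0)]
    ext i
    fin_cases i <;> simp [h, h']

theorem disjoint_sanovY_zero_one : Disjoint (sanovY 0) (sanovY 1) := by
  refine Set.disjoint_left.mpr fun v h0 h1 => ?_
  simp only [sanovY, Matrix.cons_val_zero, Matrix.cons_val_one, Set.mem_ofPred_eq] at h0 h1
  nlinarith [mul_self_nonneg (v 0 + v 1)]

theorem disjoint_sanovX_sanovY (i j : Fin 2) : Disjoint (sanovX i) (sanovY j) := by
  refine Set.disjoint_left.mpr fun v hX hY => ?_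
  fin_cases i <;> fin_cases j <;>
    simp only [sanovX, sanovY, Fin.zero_eta, Fin.mk_one, Matrix.cons_val_zero,
      Matrix.cons_val_one, Set.mem_ofPred_eq] at hX hY
  · rcases hX with h | h
    · nlinarith [mul_self_pos.mpr hY.1]
    · exact hY.1 h
  · rcases hX with h | h
    · nlinarith [mul_self_nonneg (v 0), mul_self_nonneg (v 1)]
    · rw [h, mul_zero] at hY
      nlinarith [mul_self_nonneg (v 0)]
  · nlinarith [mul_self_nonneg (v 0), mul_self_pos.mpr hY.1]
  · nlinarith [mul_self_nonneg (v 0)]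

theorem sanovGen_smul_mem_sanovX (i : Fin 2) {v : Fin 2 → ℤ} (hv : v ∉ sanovY i) :
    sanovGen i • v ∈ sanovX i := by
  fin_cases i <;>
    simp only [sanovGen, sanovX, sanovY, Fin.zero_eta, Fin.mk_one, Matrix.cons_val_zero,
      Matrix.cons_val_one, Set.mem_ofPred_eq, sanovA_smul, sanovB_smul] at hv ⊢ <;>
    push Not at hv
  · rcases eq_or_ne (v 1) 0 with h | h
    · exact Or.inr h
    · exact Or.inl (by nlinarith [hv h])
  · nlinarith

theorem sanovGen_inv_smul_mem_sanovY (i : Fin 2) {v : Fin 2 → ℤ} (hv : v ∉ sanovX i) :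
    (sanovGen i)⁻¹ • v ∈ sanovY i := by
  fin_cases i <;>
    simp only [sanovGen, sanovX, sanovY, Fin.zero_eta, Fin.mk_one, Matrix.cons_val_zero,
      Matrix.cons_val_one, Set.mem_ofPred_eq, sanovA_inv_smul, sanovB_inv_smul] at hv ⊢ <;>
    push Not at hv
  · exact ⟨hv.2, by nlinarith⟩
  · nlinarith

theorem sanovHom_injective : Function.Injective sanovHom := by
  refine FreeGroup.injective_lift_of_ping_pong (α := nonzeroSubMulAction (GL (Fin 2) ℤ) _)
    sanovGen (fun i => Subtype.val ⁻¹' sanovX i) (fun i => Subtype.val ⁻¹' sanovY i)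
    (fun i => ?_) (fun i j hij => ?_) (fun i j hij => ?_)
    (fun i j => (disjoint_sanovX_sanovY i j).preimage _) (fun i => ?_) (fun i => ?_)
  · fin_cases i
    · exact ⟨⟨![1, 0], by simp⟩, Or.inr rfl⟩
    · exact ⟨⟨![0, 1], by simp⟩, by simp [sanovX]⟩
  · exact pairwise_disjoint_fin_two (Set.disjoint_left.mpr fun v h0 h1 =>
      v.2 (sanovX_zero_inter_one_subset ⟨h0, h1⟩)) hij
  · exact pairwise_disjoint_fin_two (disjoint_sanovY_zero_one.preimage _) hij
  · rintro _ ⟨v, hv, rfl⟩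
    exact sanovGen_smul_mem_sanovX i hv
  · rintro _ ⟨v, hv, rfl⟩
    exact sanovGen_inv_smul_mem_sanovY i hv

namespace JGroup

abbrev gen (i : Fin 3) : JGroup := PresentedGroup.of i

theorem gen_sq_eq (i j : Fin 3) : gen i ^ 2 = gen j ^ 2 := by
  have h01 : gen 0 ^ 2 = gen 1 ^ 2 := by
    have := PresentedGroup.mk_eq_mk_of_mul_inv_mem (rels := JRels) (Set.mem_insert _ _)
    rwa [map_pow, map_pow] at this
  have h12 : gen 1 ^ 2 = gen 2 ^ 2 := by
    have := PresentedGroup.mk_eq_mk_of_mul_inv_mem (rels := JRels) (Set.mem_insert_of_mem _ rfl)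
    rwa [map_pow, map_pow] at this
  fin_cases i <;> fin_cases j <;> simp [h01, h12]

theorem commute_gen_sq (i : Fin 3) (x : JGroup) : Commute (gen i ^ 2) x := by
  suffices x ∈ Subgroup.centralizer {gen i ^ 2} from
    (Subgroup.mem_centralizer_singleton_iff.mp this).symm
  refine PresentedGroup.generated_by JRels _ (fun j => ?_) x
  rw [Subgroup.mem_centralizer_singleton_iff, gen_sq_eq i j]
  exact ((Commute.refl (gen j)).pow_right 2).eq.symm

def lift {H : Type*} [Group H] (f : Fin 3 → H) (hf : ∀ i j, f i ^ 2 = f j ^ 2) : JGroup →* H :=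
  PresentedGroup.toGroup (f := f) <| by
    rintro r (rfl | rfl) <;> simp [hf 0 1, hf 1 2]

@[simp]
theorem lift_gen {H : Type*} [Group H] (f : Fin 3 → H) (hf : ∀ i j, f i ^ 2 = f j ^ 2)
    (i : Fin 3) : lift f hf (gen i) = f i :=
  PresentedGroup.toGroup.of _

def partialConj (i : Fin 3) (g : JGroup) : JGroup →* JGroup :=
  lift (Function.update gen i (g * gen i * g⁻¹)) fun j k => by
    have hsq (j : Fin 3) : Function.update gen i (g * gen i * g⁻¹) j ^ 2 = gen j ^ 2 := by
      rcases eq_or_ne j i with rfl | hj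
      · rw [Function.update_self, conj_pow, (commute_gen_sq j g).symm.mul_inv_cancel]
      · rw [Function.update_of_ne hj]
    rw [hsq, hsq, gen_sq_eq]

@[simp]
theorem partialConj_gen_self (i : Fin 3) (g : JGroup) :
    partialConj i g (gen i) = g * gen i * g⁻¹ := by
  simp [partialConj]

@[simp]
theorem partialConj_gen_of_ne {i j : Fin 3} (g : JGroup) (h : j ≠ i) :
    partialConj i g (gen j) = gen j := by
  simp [partialConj, h]

def partialConjEquiv (i : Fin 3) (g : JGroup) (hg : partialConj i g g = g)
    (hg' : partialConj i g⁻¹ g = g) : MulAut JGroup :=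
  (partialConj i g).toMulEquiv (partialConj i g⁻¹)
    (PresentedGroup.ext fun j => by
      rcases eq_or_ne j i with rfl | hj
      · simp [hg']
        group
      · simp [hj])
    (PresentedGroup.ext fun j => by
      rcases eq_or_ne j i with rfl | hj
      · simp [hg]
        group
      · simp [hj])

def alpha : MulAut JGroup := partialConjEquiv 2 (Jb * Ja) (by simp [Ja, Jb]) (by simp [Ja, Jb])

def beta : MulAut JGroup := partialConjEquiv 0 (Jb * Jc) (by simp [Jc, Jb]) (by simp [Jc, Jb])

def affineRep : JGroup →* IntAffineGroup (Fin 2) :=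
  lift (fun i => reflection (![Pi.single 0 1, 0, -Pi.single 1 1] i)) fun i j => by
    simp only [reflection_sq]

@[simp]
theorem affineRep_gen (i : Fin 3) :
    affineRep (gen i) = reflection (![Pi.single 0 1, 0, -Pi.single 1 1] i) :=
  lift_gen _ _ i

theorem centralizer_range_affineRep : Subgroup.centralizer (Set.range affineRep) = ⊥ := by
  refine eq_bot_iff.mpr (le_of_le_of_eq (Subgroup.centralizer_le ?_)
    centralizer_reflection_zero_translations)
  rintro _ (rfl | ⟨i, rfl⟩)
  · exact ⟨gen 1, by simp⟩
  · fin_cases i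
    · exact ⟨gen 0 * gen 1, by simp [reflection_mul_reflection]⟩
    · exact ⟨gen 1 * gen 2, by simp [reflection_mul_reflection]⟩

theorem rightHom_affineRep_sq (x : JGroup) : rightHom (affineRep x) ^ 2 = 1 := by
  have hx : rightHom (affineRep x) ∈ Subgroup.zpowers (-1) :=
    PresentedGroup.generated_by JRels ((Subgroup.zpowers (-1)).comap (rightHom.comp affineRep))
      (fun j => by simp) x
  obtain ⟨k, hk⟩ := hx
  rw [← hk, ← zpow_natCast, ← zpow_mul, mul_comm, zpow_mul]
  simp

theorem partialConjEquiv_mem_intertwiners {V : Type*} [Group V] (ρ : JGroup →* V) (m : V)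
    {i : Fin 3} {g : JGroup} (hg : partialConj i g g = g) (hg' : partialConj i g⁻¹ g = g)
    (hfix : ∀ j ≠ i, m * ρ (gen j) * m⁻¹ = ρ (gen j))
    (hconj : m * ρ (gen i) * m⁻¹ = ρ g * ρ (gen i) * (ρ g)⁻¹) :
    (partialConjEquiv i g hg hg', MulAut.conj m) ∈ intertwiners ρ := by
  suffices ρ.comp (partialConj i g) = (MulAut.conj m).toMonoidHom.comp ρ from
    fun x => DFunLike.congr_fun this x
  refine PresentedGroup.ext fun j => ?_
  rcases eq_or_ne j i with rfl | hj
  · simp [hconj]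
  · simp [hj, hfix j hj]

theorem alpha_mem_intertwiners :
    (alpha, MulAut.conj (inr sanovA)) ∈ intertwiners affineRep := by
  refine partialConjEquiv_mem_intertwiners _ _ _ _ (fun j hj => ?_) ?_
  · rw [affineRep_gen, inr_conj_reflection]
    congr 1
    ext k
    fin_cases j <;> fin_cases k <;> simp [sanovA] at hj ⊢
  · simp only [Jb, Ja, map_mul, affineRep_gen, reflection_mul_reflection,
      translation_conj_reflection, inr_conj_reflection]
    congr 1
    ext k
    fin_cases k <;> simp [sanovA]

theorem beta_mem_intertwiners :
    (beta, MulAut.conj (inr sanovB)) ∈ intertwiners affineRep := by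
  refine partialConjEquiv_mem_intertwiners _ _ _ _ (fun j hj => ?_) ?_
  · rw [affineRep_gen, inr_conj_reflection]
    congr 1
    ext k
    fin_cases j <;> fin_cases k <;> simp [sanovB] at hj ⊢
  · simp only [Jb, Jc, map_mul, affineRep_gen, reflection_mul_reflection,
      translation_conj_reflection, inr_conj_reflection]
    congr 1
    ext k
    fin_cases k <;> simp [sanovB]

def autHom : FreeGroup (Fin 2) →* MulAut JGroup := FreeGroup.lift ![alpha, beta]

theorem autHom_mem_intertwiners (w : FreeGroup (Fin 2)) :
    (autHom w, MulAut.conj (inr (sanovHom w))) ∈ intertwiners affineRep := by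
  refine FreeGroup.map_mem_of_forall_of_mem
    (autHom.prod ((MulAut.conj.comp inr).comp sanovHom)) (fun i => ?_) w
  fin_cases i
  · simpa [autHom, sanovHom, sanovGen] using alpha_mem_intertwiners
  · simpa [autHom, sanovHom, sanovGen] using beta_mem_intertwiners

theorem injective_toOut_comp_autHom : Function.Injective ((toOut JGroup).comp autHom) := by
  refine (injective_iff_map_eq_one _).mpr fun w hw => ?_
  obtain ⟨g, hg⟩ : autHom w ∈ innerAutos JGroup := (QuotientGroup.eq_one_iff (autHom w)).mp hw
  have hint := autHom_mem_intertwiners w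
  rw [← hg] at hint
  have hρg : affineRep g = inr (sanovHom w) :=
    eq_of_conj_mem_intertwiners centralizer_range_affineRep hint
  have hsq : sanovHom (w ^ 2) = sanovHom 1 := by
    rw [map_pow, map_one, ← rightHom_affineRep_sq g, hρg, rightHom_inr]
  exact (pow_eq_one_iff_left two_ne_zero).mp (sanovHom_injective hsq)

end JGroup

/-- **Levitt, Section 6.** In `J = ⟨a,b,c | a² = b², b² = c²⟩`, the automorphism `α` fixing
`a, b` and conjugating `c` by `ba`, and the automorphism `β` fixing `b, c` and conjugating
`a` by `bc`, have images in `Out J` generating a free subgroup of rank 2; in particular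
`Out J` contains a nonabelian free group. -/
theorem out_J_contains_free : ∃ α β : MulAut JGroup,
    α Ja = Ja ∧ α Jb = Jb ∧ α Jc = (Jb * Ja) * Jc * (Jb * Ja)⁻¹ ∧
    β Jb = Jb ∧ β Jc = Jc ∧ β Ja = (Jb * Jc) * Ja * (Jb * Jc)⁻¹ ∧
    Function.Injective
      (FreeGroup.lift (fun i : Fin 2 => if i = 0 then toOut JGroup α else toOut JGroup β) :
        FreeGroup (Fin 2) →* Out JGroup) ∧
    ∃ H : Subgroup (Out JGroup), Nonempty (H ≃* FreeGroup (Fin 2)) := by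
  have hlift : (FreeGroup.lift fun i : Fin 2 =>
      if i = 0 then toOut JGroup JGroup.alpha else toOut JGroup JGroup.beta) =
      (toOut JGroup).comp JGroup.autHom :=
    FreeGroup.ext_hom _ _ fun i => by fin_cases i <;> simp [JGroup.autHom]
  have hinj := hlift ▸ JGroup.injective_toOut_comp_autHom
  refine ⟨JGroup.alpha, JGroup.beta, ?_, ?_, ?_, ?_, ?_, ?_, hinj, _,
    ⟨(MonoidHom.ofInjective hinj).symm⟩⟩ <;>
  simp [JGroup.alpha, JGroup.beta, JGroup.partialConjEquiv, Ja, Jb, Jc]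
end
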